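/- arXiv:1307.0556 — 4 statements merged into one kernel-verified Lean document; each statement's English description precedes it below -/
import Mathlib

section
/- Every involution-free rooted tree (H,x) with at least three vertices contains a partial hardness gadget. -/
open SimpleGraph

/-- The number of walks of length `n` from `u` to `v` in `G`. -/
noncomputable def walkCount {V : Type*} (G : SimpleGraph V) (n : ℕ) (u v : V) : ℕ :=
  Nat.card {w : G.Walk u v // w.length = n}

/-- The degree of a vertex, as the cardinality of its neighbour set. -/
noncomputable def vdeg {V : Type*} (G : SimpleGraph V) (v : V) : ℕ :=
  (G.neighborSet v).ncard

/-- An involution of a graph: an automorphism of order two. -/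
def IsInvolution {V : Type*} (G : SimpleGraph V) (σ : G ≃g G) : Prop :=
  σ.toEquiv ≠ Equiv.refl V ∧ ∀ v, σ (σ v) = v

/-- A graph is involution-free if it has no involution. -/
def InvolutionFree {V : Type*} (G : SimpleGraph V) : Prop :=
  ¬ ∃ σ : G ≃g G, IsInvolution G σ

/-- A rooted graph `(G, x)` is involution-free if `G` has no involution fixing `x`. -/
def RootedInvolutionFree {V : Type*} (G : SimpleGraph V) (x : V) : Prop :=
  ¬ ∃ σ : G ≃g G, IsInvolution G σ ∧ σ x = x

/-- Every edge of `G` belongs to at most one cycle: any two cycles sharing an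
edge have the same edge set. -/
def EdgesOnAtMostOneCycle {V : Type*} (G : SimpleGraph V) : Prop :=
  ∀ (a b : V) (c : G.Walk a a) (d : G.Walk b b), c.IsCycle → d.IsCycle →
    ∀ e, e ∈ c.edges → e ∈ d.edges → ∀ f, f ∈ c.edges ↔ f ∈ d.edges

/-- A cactus graph: a connected simple graph in which every edge belongs to at
most one cycle. -/
def IsCactus {V : Type*} (G : SimpleGraph V) : Prop :=
  G.Connected ∧ EdgesOnAtMostOneCycle G

/-- The distance from a vertex to a set of vertices. -/
noncomputable def setDist {V : Type*} (G : SimpleGraph V) (v : V) (S : Set V) : ℕ :=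
  sInf (G.dist v '' S)

/-- A hardness gadget `(β, s, t, O, i, K, k, w)` in a graph `G`. -/
structure HardnessGadget {V : Type*} (G : SimpleGraph V) where
  β : ℕ
  s : V
  t : V
  i : V
  O : Set V
  K : Set V
  k : V → ℕ
  w : V → V
  β_pos : 0 < β
  i_not_in_O : i ∉ O
  i_not_in_K : i ∉ K
  O_disj_K : Disjoint O K
  nbhd_partition : O ∪ {i} ∪ K = G.neighborSet s
  O_odd : Odd O.ncard
  s_unique : ∀ o ∈ O, ∀ y ∈ O ∪ {i}, ∀ z : V,
    (G.Adj z o ∧ G.Adj z y ∧ Odd (walkCount G β z t)) ↔ z = s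
  i_t_even : Even (walkCount G (1 + β) i t)
  k_pos : ∀ u ∈ K, 0 < k u
  w_walks : ∀ u ∈ K, Even (walkCount G (k u) (w u) u) ∧
    ∀ y ∈ O ∪ {i}, Odd (walkCount G (k u) (w u) y)

/-- The distance requirements of a hardness gadget with respect to a vertex `v`. -/
def HardnessGadget.SatisfiesDistReq {V : Type*} {G : SimpleGraph V}
    (Γ : HardnessGadget G) (v : V) : Prop :=
  ((setDist G v (Γ.O ∪ {Γ.i}) : ℤ) + (G.dist v Γ.t : ℤ) > (Γ.β : ℤ) - 1) ∧
  ∀ u ∈ Γ.K, ((G.dist v (Γ.w u) : ℤ) + (setDist G v (Γ.O ∪ {Γ.i, u}) : ℤ)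
      > (Γ.k u : ℤ) - 2)

/-- `P` is the unique shortest path between its endpoints. -/
def IsUniqueShortestPath {V : Type*} (G : SimpleGraph V) {u v : V}
    (P : G.Walk u v) : Prop :=
  P.IsPath ∧ ∀ Q : G.Walk u v, Q.IsPath → Q.length ≤ P.length → Q = P

/-- The graph `G` contains a cycle. -/
def HasCycle {V : Type*} (G : SimpleGraph V) : Prop :=
  ∃ (a : V) (c : G.Walk a a), c.IsCycle

/-- The edge `e` lies on a 4-cycle of `G`. -/
def EdgeOnFourCycle {V : Type*} (G : SimpleGraph V) (e : Sym2 V) : Prop :=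
  ∃ (a : V) (c : G.Walk a a), c.IsCycle ∧ c.length = 4 ∧ e ∈ c.edges

/-- An unbristled mosaic: the one-vertex rooted graph, or a rooted cactus graph
that is a union of 4-cycles. -/
def IsUnbristledMosaic {V : Type*} (G : SimpleGraph V) (x : V) : Prop :=
  (∀ v : V, v = x) ∨ (IsCactus G ∧ ∀ e ∈ G.edgeSet, EdgeOnFourCycle G e)

/-- A mosaic: a rooted graph obtained from an unbristled mosaic on a vertex
subset `V'` containing the root by attaching a perfect matching ("bristles")
between the remaining vertices and a subset of `V'`. -/
def IsMosaic {V : Type*} (G : SimpleGraph V) (x : V) : Prop :=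
  ∃ (V' : Set V) (hx : x ∈ V'),
    IsUnbristledMosaic (G.induce V') ⟨x, hx⟩ ∧
    (∀ v, v ∉ V' → ∀ u, G.Adj v u → u ∈ V') ∧
    (∀ v, v ∉ V' → ∃! u, G.Adj v u) ∧
    (∀ u v₁ v₂, v₁ ∉ V' → v₂ ∉ V' → G.Adj u v₁ → G.Adj u v₂ → v₁ = v₂)

/-- A proper mosaic: a mosaic containing at least one cycle. -/
def IsProperMosaic {V : Type*} (G : SimpleGraph V) (x : V) : Prop :=
  IsMosaic G x ∧ HasCycle G

/-- A shortcut in the rooted graph `(G, x)`: a pair of distinct odd-degree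
vertices of degree at least 3 with a unique shortest path between them that
avoids `x`. -/
def HasShortcut {V : Type*} (G : SimpleGraph V) (x : V) : Prop :=
  ∃ v₁ v₂ : V, v₁ ≠ v₂ ∧ Odd (vdeg G v₁) ∧ Odd (vdeg G v₂) ∧
    3 ≤ vdeg G v₁ ∧ 3 ≤ vdeg G v₂ ∧
    ∃ P : G.Walk v₁ v₂, IsUniqueShortestPath G P ∧ x ∉ P.support

/-- A 2,3-path `(P, v₂, v₃)` in a rooted graph: `v₂` and `v₃` lie on a common
cycle, have degrees 2 and 3 respectively, and the extensions of `P` by `v₂`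
and by `v₃` are unique shortest paths from the root. -/
def Is23Path {V : Type*} (G : SimpleGraph V) {x z : V} (P : G.Walk x z)
    (v₂ v₃ : V) : Prop :=
  (∃ (a : V) (c : G.Walk a a), c.IsCycle ∧ v₂ ∈ c.support ∧ v₃ ∈ c.support) ∧
  vdeg G v₂ = 2 ∧ vdeg G v₃ = 3 ∧
  (∃ h₂ : G.Adj z v₂, IsUniqueShortestPath G (P.concat h₂)) ∧
  (∃ h₃ : G.Adj z v₃, IsUniqueShortestPath G (P.concat h₃))

/-- A partial hardness gadget `(s, i, O, P)` in the rooted graph `(G, x)`. -/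
def IsPartialHardnessGadget {V : Type*} (G : SimpleGraph V) (x s i : V)
    (O : Set V) (P : G.Walk x i) : Prop :=
  i ∉ O ∧ insert i O = G.neighborSet s ∧ Odd O.ncard ∧
  IsUniqueShortestPath G P ∧
  ∃ his : G.Adj i s, IsUniqueShortestPath G (P.concat his) ∧
    ∀ o ∈ O, ∃ hso : G.Adj s o, IsUniqueShortestPath G ((P.concat his).concat hso)

/-- `C` is (the vertex set of) a connected component of `G - {x}`, i.e. of the
split of `G` at `x`; the corresponding member of the split is the subgraph of
`G` induced by `C ∪ {x}`. -/
def IsSplitComponent {V : Type*} (G : SimpleGraph V) (x : V) (C : Set V) : Prop :=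
  x ∉ C ∧ C.Nonempty ∧ (G.induce C).Connected ∧
  ∀ u ∈ C, ∀ v : V, G.Adj u v → v ≠ x → v ∈ C

/-- `x` is a cut vertex: `G - {x}` has at least two connected components. -/
def IsCutVertex {V : Type*} (G : SimpleGraph V) (x : V) : Prop :=
  ∃ C₁ C₂ : Set V, IsSplitComponent G x C₁ ∧ IsSplitComponent G x C₂ ∧ C₁ ≠ C₂


/-!
In a tree every path is the unique shortest path between its ends, so only the parity condition
needs work. If a vertex `s` other than the root has even degree, the neighbours of `s` other than
its parent `i` form an odd set `O`. Otherwise every vertex other than the root has odd degree.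
Take a vertex `v` of degree at least two that is farthest from the root. Its children are leaves,
and it has at least two of them: the root has no parent, and any other `v` has odd degree, so at
least three. Swapping two leaves with the same parent is an involution fixing the root.
-/

namespace SimpleGraph

variable {V : Type*} {G : SimpleGraph V}

lemma vdeg_eq_degree (v : V) [Fintype (G.neighborSet v)] : vdeg G v = G.degree v := by
  rw [vdeg, Set.ncard_eq_toFinset_card', Set.toFinset_card, card_neighborSet_eq_degree]

lemma neighborSet_eq_singleton_of_vdeg_eq_one {v w : V} (hvw : G.Adj v w) (hw : vdeg G w = 1) :
    G.neighborSet w = {v} := by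
  obtain ⟨u, hu⟩ := Set.ncard_eq_one.1 hw
  have hv : v ∈ G.neighborSet w := hvw.symm
  rw [hu, Set.mem_singleton_iff] at hv
  rw [hu, hv]

def swapOfNeighborSetEq [DecidableEq V] {a b : V} (h : G.neighborSet a = G.neighborSet b) :
    G ≃g G where
  toEquiv := Equiv.swap a b
  map_rel_iff' {u w} := by
    have hab (z : V) : G.Adj a z ↔ G.Adj b z := Set.ext_iff.1 h z
    simp only [Equiv.swap_apply_def]
    grind [G.adj_comm, G.loopless]

lemma RootedInvolutionFree.eq_of_neighborSet_eq {x a b : V} (hif : RootedInvolutionFree G x)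
    (hax : a ≠ x) (hbx : b ≠ x) (h : G.neighborSet a = G.neighborSet b) : a = b := by
  classical
  by_contra hab
  refine hif ⟨swapOfNeighborSetEq h, ⟨fun hid => hab ?_, Equiv.swap_apply_self a b⟩,
    Equiv.swap_apply_of_ne_of_ne hax.symm hbx.symm⟩
  change Equiv.swap a b = Equiv.refl V at hid
  simpa using (Equiv.ext_iff.1 hid a).symm

lemma IsAcyclic.isUniqueShortestPath (hG : G.IsAcyclic) {u v : V} {P : G.Walk u v}
    (hP : P.IsPath) : IsUniqueShortestPath G P :=
  ⟨hP, fun Q hQ _ => congrArg Subtype.val ((hG.subsingleton_path u v).elim ⟨Q, hQ⟩ ⟨P, hP⟩)⟩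

lemma IsAcyclic.length_eq_dist (hG : G.IsAcyclic) {u v : V} {P : G.Walk u v} (hP : P.IsPath) :
    P.length = G.dist u v := by
  obtain ⟨Q, hQ, hlen⟩ := P.reachable.exists_path_of_dist
  rw [← (hG.isUniqueShortestPath hP).2 Q hQ (hlen ▸ G.dist_le P), hlen]

lemma IsAcyclic.isPath_concat_of_ne_penultimate (hG : G.IsAcyclic) {u v w : V} {P : G.Walk u v}
    (hP : P.IsPath) (hvw : G.Adj v w) (hw : w ≠ P.penultimate) : (P.concat hvw).IsPath :=
  hP.concat (fun hmem => hw (hG.eq_penultimate_of_adj_end hP hvw hmem)) hvw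

lemma IsAcyclic.isPartialHardnessGadget_of_even_vdeg (hG : G.IsAcyclic) {x s : V}
    {P : G.Walk x s} (hP : P.IsPath) (hsx : s ≠ x) (hfin : (G.neighborSet s).Finite)
    (heven : Even (vdeg G s)) :
    IsPartialHardnessGadget G x s P.penultimate (G.neighborSet s \ {P.penultimate})
      P.dropLast := by
  have his : G.Adj P.penultimate s := P.adj_penultimate (Walk.not_nil_of_ne hsx.symm)
  have hmem : P.penultimate ∈ G.neighborSet s := his.symm
  have hpos : 0 < vdeg G s := (Set.ncard_pos hfin).2 ⟨_, hmem⟩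
  refine ⟨by simp, ?_, ?_, hG.isUniqueShortestPath hP.dropLast, his, ?_, ?_⟩
  · rw [Set.insert_sdiff_singleton, Set.insert_eq_of_mem hmem]
  · rw [Set.ncard_sdiff_singleton_of_mem hmem]
    exact Nat.Even.sub_odd hpos heven odd_one
  · rw [Walk.concat_dropLast]
    exact hG.isUniqueShortestPath hP
  · rintro o ⟨hso, hoi⟩
    refine ⟨hso, ?_⟩
    rw [Walk.concat_dropLast]
    exact hG.isUniqueShortestPath (hG.isPath_concat_of_ne_penultimate hP hso hoi)

lemma IsAcyclic.dist_eq_add_one_of_ne_penultimate (hG : G.IsAcyclic) {x v w : V}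
    {P : G.Walk x v} (hP : P.IsPath) (hvw : G.Adj v w) (hw : w ≠ P.penultimate) :
    G.dist x w = G.dist x v + 1 := by
  rw [← hG.length_eq_dist hP, ← hG.length_eq_dist (hG.isPath_concat_of_ne_penultimate hP hvw hw),
    Walk.length_concat]

lemma IsTree.exists_two_le_vdeg [Fintype V] (hT : G.IsTree) (hcard : 3 ≤ Fintype.card V) :
    ∃ v, 2 ≤ vdeg G v := by
  classical
  have hsum : ∑ _v : V, 1 < ∑ v, G.degree v := by
    have := hT.card_edgeFinset
    simp only [sum_degrees_eq_twice_card_edges, Finset.sum_const, Finset.card_univ, smul_eq_mul,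
      mul_one]
    lia
  obtain ⟨v, -, hv⟩ := Finset.exists_lt_of_sum_lt hsum
  exact ⟨v, by rw [vdeg_eq_degree]; lia⟩

lemma IsTree.exists_ne_neighborSet_eq [Fintype V] (hT : G.IsTree) (x : V)
    (hcard : 3 ≤ Fintype.card V) (hodd : ∀ v ≠ x, Odd (vdeg G v)) :
    ∃ a b, a ≠ b ∧ a ≠ x ∧ b ≠ x ∧ G.neighborSet a = G.neighborSet b := by
  classical
  obtain ⟨v, hv2, hmax⟩ : ∃ v, 2 ≤ vdeg G v ∧ ∀ u, 2 ≤ vdeg G u → G.dist x u ≤ G.dist x v := by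
    obtain ⟨u, hu⟩ := hT.exists_two_le_vdeg hcard
    obtain ⟨v, hv, hmax⟩ := Finset.exists_max_image {u | 2 ≤ vdeg G u} (G.dist x)
      ⟨u, by simpa using hu⟩
    exact ⟨v, by simpa using hv, fun u hu => hmax u (by simpa using hu)⟩
  obtain ⟨P, hP, -⟩ := hT.connected.exists_path_of_dist x v
  have hG : G.IsAcyclic := hT.isAcyclic
  have hleaf : ∀ w ∈ G.neighborSet v \ {P.penultimate}, G.neighborSet w = {v} ∧ w ≠ x := by
    rintro w ⟨hvw, hw⟩
    have hdist := hG.dist_eq_add_one_of_ne_penultimate hP hvw hw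
    have hpos : 0 < vdeg G w := (Set.ncard_pos (Set.toFinite _)).2 ⟨v, hvw.symm⟩
    have hlt : ¬ 2 ≤ vdeg G w := fun h => by have := hmax w h; lia
    refine ⟨neighborSet_eq_singleton_of_vdeg_eq_one hvw (by lia), ?_⟩
    rintro rfl
    simp at hdist
  have hchildren : 1 < (G.neighborSet v \ {P.penultimate}).ncard := by
    by_cases hvx : v = x
    · subst hvx
      rwa [Walk.eq_nil_iff_nil.2 (Walk.isPath_iff_nil.1 hP), Walk.penultimate_nil,
        Set.sdiff_singleton_eq_self G.notMem_neighborSet_self]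
    · obtain ⟨k, hk⟩ := hodd v hvx
      have := Set.pred_ncard_le_ncard_sdiff_singleton (G.neighborSet v) P.penultimate
      unfold vdeg at hk hv2
      lia
  obtain ⟨a, b, ha, hb, hab⟩ := (Set.one_lt_ncard_iff (Set.toFinite _)).1 hchildren
  exact ⟨a, b, hab, (hleaf a ha).2, (hleaf b hb).2, (hleaf a ha).1.trans (hleaf b hb).1.symm⟩

end SimpleGraph

/-- Every involution-free rooted tree with at least three vertices contains a
partial hardness gadget. -/
theorem involutionFree_tree_partialHardnessGadget {V : Type*} [Fintype V]
    (G : SimpleGraph V) (htree : G.IsTree) (x : V)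
    (hif : RootedInvolutionFree G x) (hcard : 3 ≤ Fintype.card V) :
    ∃ (s i : V) (O : Set V) (P : G.Walk x i),
      IsPartialHardnessGadget G x s i O P := by
  by_cases heven : ∃ s, s ≠ x ∧ Even (vdeg G s)
  · obtain ⟨s, hsx, hs⟩ := heven
    obtain ⟨P, hP, -⟩ := htree.connected.exists_path_of_dist x s
    exact ⟨_, _, _, _,
      IsAcyclic.isPartialHardnessGadget_of_even_vdeg htree.isAcyclic hP hsx (Set.toFinite _) hs⟩
  · obtain ⟨a, b, hab, hax, hbx, hN⟩ := htree.exists_ne_neighborSet_eq x hcard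
      fun v hv => Nat.not_even_iff_odd.1 fun hv' => heven ⟨v, hv, hv'⟩
    exact absurd (hif.eq_of_neighborSet_eq hax hbx hN) hab
end

section
/- If a rooted cactus graph (H,x) has a non-trivial automorphism (an automorphism of H other than the identity that fixes x), then it has an involution (an involution of H that fixes x). -/
open SimpleGraph

/-!
Let `π ≠ 1` be an automorphism fixing the root. If `π` has even order `2m`, then `π ^ m` is an
involution fixing the root. If the order is odd, take an edge `zy` with `π z = z` and `π y ≠ y`
(it exists on any path from the root to a moved vertex) and let `B` be the branch at `z`
containing `y`. The branches `B` and `π B` are disjoint: otherwise `z y … π y z` is a cycle whose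
image under `π` shares the edge `z (π y)` with it, so in a cactus both are the same cycle and
`π (π y)` is a neighbour of `z` on it, forcing `π² y = y` and, the order being odd, `π y = y`.
As `z` is the only vertex outside `B` adjacent to `B`, exchanging `B` and `π B` by `π` and `π⁻¹`
and fixing everything else is then an involution fixing the root.
-/

lemma smul_eq_of_pow_two_smul_eq {M α : Type*} [Group M] [MulAction M α] {g : M} {a : α}
    (hg : Odd (orderOf g)) (h : (g ^ 2) • a = a) : g • a = a := by
  obtain ⟨k, hk⟩ := hg
  have hg_eq : (g ^ 2) ^ (k + 1) = g := by
    rw [← pow_mul, show 2 * (k + 1) = orderOf g + 1 by omega, pow_succ, pow_orderOf_eq_one,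
      one_mul]
  rw [← hg_eq, ← MulAction.mem_stabilizer_iff]
  exact pow_mem (MulAction.mem_stabilizer_iff.mpr h) _

namespace SimpleGraph

variable {V : Type*} {G : SimpleGraph V}

lemma isInvolution_iff_orderOf_eq_two {σ : G ≃g G} : IsInvolution G σ ↔ orderOf σ = 2 := by
  have : Fact (Nat.Prime 2) := ⟨Nat.prime_two⟩
  rw [orderOf_eq_prime_iff, IsInvolution, and_comm, pow_two]
  refine and_congr ⟨fun h => RelIso.ext h, fun h v => by simp [← RelIso.mul_apply, h]⟩
    (not_congr ⟨fun h => RelIso.toEquiv_injective h, fun h => h ▸ rfl⟩)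

lemma exists_involution_of_even_orderOf {x : V} {φ : G ≃g G} (hx : φ x = x)
    (hφ : 0 < orderOf φ) (heven : Even (orderOf φ)) :
    ∃ σ : G ≃g G, IsInvolution G σ ∧ σ x = x := by
  refine ⟨φ ^ (orderOf φ / 2), ?_, ?_⟩
  · exact isInvolution_iff_orderOf_eq_two.mpr
      (orderOf_pow_orderOf_div hφ.ne' (even_iff_two_dvd.mp heven))
  · rw [← RelIso.smul_def, ← MulAction.mem_stabilizer_iff]
    exact pow_mem (MulAction.mem_stabilizer_iff.mpr hx) _

lemma Iso.exists_adj_apply_eq_of_ne_one (hG : G.Connected) {x : V} {φ : G ≃g G}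
    (hx : φ x = x) (hφ : φ ≠ 1) : ∃ z y, G.Adj z y ∧ φ z = z ∧ φ y ≠ y := by
  obtain ⟨v, hv⟩ : ∃ v, φ v ≠ v := by
    by_contra! h
    exact hφ (RelIso.ext h)
  obtain ⟨d, -, hd₁, hd₂⟩ :=
    (hG.preconnected x v).some.exists_boundary_dart {u | φ u = u} hx hv
  exact ⟨d.fst, d.snd, d.adj, hd₁, hd₂⟩

def branch (G : SimpleGraph V) (z y : V) : Set V :=
  {v | ∃ w : G.Walk y v, z ∉ w.support}

lemma mem_branch_self {z y : V} (h : y ≠ z) : y ∈ G.branch z y :=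
  ⟨Walk.nil, by simpa using h.symm⟩

lemma mem_branch_of_adj {z y u v : V} (hu : u ∈ G.branch z y) (huv : G.Adj u v) (hv : v ≠ z) :
    v ∈ G.branch z y := by
  obtain ⟨w, hw⟩ := hu
  refine ⟨w.concat huv, ?_⟩
  rw [Walk.support_concat, List.mem_append, List.mem_singleton, not_or]
  exact ⟨hw, hv.symm⟩

lemma mem_branch_of_mem_branch {z y y' v : V} (hy : v ∈ G.branch z y) (hy' : v ∈ G.branch z y') :
    y' ∈ G.branch z y := by
  obtain ⟨w, hw⟩ := hy
  obtain ⟨w', hw'⟩ := hy'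
  refine ⟨w.append w'.reverse, ?_⟩
  rw [Walk.mem_support_append_iff, Walk.support_reverse, List.mem_reverse]
  exact not_or.mpr ⟨hw, hw'⟩

lemma Iso.apply_mem_branch (φ : G ≃g G) {z y v : V} (hv : v ∈ G.branch z y) :
    φ v ∈ G.branch (φ z) (φ y) := by
  obtain ⟨w, hw⟩ := hv
  refine ⟨w.map φ.toHom, ?_⟩
  rw [Walk.support_map, List.mem_map]
  rintro ⟨a, ha, hφa⟩
  exact hw (φ.injective hφa ▸ ha)

lemma exists_isCycle_of_mem_branch {z y y' : V} (hzy : G.Adj z y)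
    (hzy' : G.Adj z y') (hne : y ≠ y') (hy' : y' ∈ G.branch z y) :
    ∃ c : G.Walk z z, c.IsCycle ∧ s(z, y) ∈ c.edges ∧ s(z, y') ∈ c.edges ∧
      ∀ w, s(z, w) ∈ c.edges → w = y ∨ w = y' := by
  classical
  obtain ⟨q, hq⟩ := hy'
  have hzq : z ∉ q.bypass.support := fun h => hq (q.support_bypass_subset_support h)
  have hz_edges : ∀ w, s(z, w) ∉ q.bypass.edges :=
    fun w h => hzq (q.bypass.fst_mem_support_of_mem_edges h)
  have hedges : ∀ w, s(z, w) ∈ (Walk.cons hzy (q.bypass.concat hzy'.symm)).edges ↔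
      w = y ∨ w = y' := by
    intro w
    simp only [Walk.edges_cons, Walk.edges_concat, List.concat_eq_append, List.mem_cons,
      List.mem_append, hz_edges, false_or, Sym2.eq_iff]
    grind [hzy.ne, hzy'.ne]
  refine ⟨Walk.cons hzy (q.bypass.concat hzy'.symm), ?_, (hedges y).mpr (.inl rfl),
    (hedges y').mpr (.inr rfl), fun w => (hedges w).mp⟩
  rw [Walk.cons_isCycle_iff, Walk.edges_concat, List.concat_eq_append, List.mem_append,
    List.mem_singleton, Sym2.eq_iff]
  refine ⟨q.bypass_isPath.concat hzq _, ?_⟩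
  grind [hz_edges y, hzy'.ne]

lemma EdgesOnAtMostOneCycle.apply_apply_eq (hG : EdgesOnAtMostOneCycle G) (φ : G ≃g G)
    {z y : V} (hz : φ z = z) (hzy : G.Adj z y) (hy : φ y ≠ y) (hφy : φ y ∈ G.branch z y) :
    φ (φ y) = y := by
  classical
  have hzφy : G.Adj z (φ y) := by simpa [hz] using φ.map_adj_iff.mpr hzy
  obtain ⟨c, hc, hy_c, hφy_c, hnbr⟩ :=
    exists_isCycle_of_mem_branch hzy hzφy (Ne.symm hy) hφy
  have hmap : ∀ w, s(z, w) ∈ c.edges → s(z, φ w) ∈ (c.map φ.toHom).edges := fun w hw => by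
    rw [Walk.edges_map]
    simpa [hz] using List.mem_map_of_mem (f := Sym2.map φ) hw
  have hsame := hG z (φ z) c (c.map φ.toHom) hc (hc.map (f := φ.toHom) φ.injective) _ hφy_c
    (hmap y hy_c)
  rcases hnbr _ ((hsame _).mpr (hmap _ hφy_c)) with h | h
  · exact h
  · exact absurd (φ.injective h) hy

namespace Iso

open Classical in
noncomputable def swapOn (φ : G ≃g G) (S : Set V) (v : V) : V :=
  if v ∈ S then φ v else if φ.symm v ∈ S then φ.symm v else v

variable {φ : G ≃g G} {S : Set V} {v : V}

lemma swapOn_of_mem (hv : v ∈ S) : swapOn φ S v = φ v := by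
  simp [swapOn, hv]

lemma swapOn_of_symm_mem (hv : v ∉ S) (h : φ.symm v ∈ S) : swapOn φ S v = φ.symm v := by
  simp [swapOn, hv, h]

lemma swapOn_of_not_mem (hv : v ∉ S) (h : φ.symm v ∉ S) : swapOn φ S v = v := by
  simp [swapOn, hv, h]

lemma swapOn_of_apply_eq (hdisj : ∀ u ∈ S, φ u ∉ S) (hv : φ v = v) : swapOn φ S v = v := by
  have hvS : v ∉ S := fun h => hdisj v h (hv.symm ▸ h)
  exact swapOn_of_not_mem hvS (by rwa [φ.symm_apply_eq.mpr hv.symm])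

lemma swapOn_involutive (hdisj : ∀ u ∈ S, φ u ∉ S) : Function.Involutive (swapOn φ S) := by
  intro v
  by_cases hv : v ∈ S
  · rw [swapOn_of_mem hv, swapOn_of_symm_mem (hdisj v hv) (by simpa using hv), φ.symm_apply_apply]
  by_cases hv' : φ.symm v ∈ S
  · rw [swapOn_of_symm_mem hv hv', swapOn_of_mem hv', φ.apply_symm_apply]
  · rw [swapOn_of_not_mem hv hv', swapOn_of_not_mem hv hv']

-- Along every edge, `swapOn φ S` agrees with one of `φ`, `φ⁻¹` or the identity.
lemma swapOn_adj (hclosed : ∀ u ∈ S, ∀ w, G.Adj u w → w ∈ S ∨ φ w = w) {u w : V}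
    (huw : G.Adj u w) : G.Adj (swapOn φ S u) (swapOn φ S w) := by
  have along_φ : ∀ u w, G.Adj u w → u ∈ S → swapOn φ S w = φ w := fun u w huw hu => by
    rcases hclosed u hu w huw with hw | hw
    · exact swapOn_of_mem hw
    · by_cases hwS : w ∈ S
      · exact swapOn_of_mem hwS
      · rw [swapOn_of_not_mem hwS (by rwa [φ.symm_apply_eq.mpr hw.symm]), hw]
  have along_symm : ∀ u w, G.Adj u w → w ∉ S → φ.symm u ∈ S → swapOn φ S w = φ.symm w :=
    fun u w huw hw hu => by
      rcases hclosed _ hu _ (φ.symm.map_adj_iff.mpr huw) with hw' | hw'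
      · exact swapOn_of_symm_mem hw hw'
      · rw [φ.apply_symm_apply] at hw'
        rw [swapOn_of_not_mem hw (hw' ▸ hw), ← hw']
  by_cases hu : u ∈ S
  · rw [swapOn_of_mem hu, along_φ u w huw hu]
    exact φ.map_adj_iff.mpr huw
  by_cases hw : w ∈ S
  · rw [swapOn_of_mem hw, along_φ w u huw.symm hw]
    exact φ.map_adj_iff.mpr huw
  by_cases hu' : φ.symm u ∈ S
  · rw [swapOn_of_symm_mem hu hu', along_symm u w huw hw hu']
    exact φ.symm.map_adj_iff.mpr huw
  by_cases hw' : φ.symm w ∈ S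
  · rw [swapOn_of_symm_mem hw hw', along_symm w u huw.symm hu hw']
    exact φ.symm.map_adj_iff.mpr huw
  · rwa [swapOn_of_not_mem hu hu', swapOn_of_not_mem hw hw']

noncomputable def swapOnIso (φ : G ≃g G) (S : Set V) (hdisj : ∀ u ∈ S, φ u ∉ S)
    (hclosed : ∀ u ∈ S, ∀ w, G.Adj u w → w ∈ S ∨ φ w = w) : G ≃g G where
  toEquiv := (swapOn_involutive hdisj).toPerm
  map_rel_iff' {u w} := by
    have hinv := swapOn_involutive hdisj
    refine ⟨fun h => ?_, swapOn_adj hclosed⟩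
    simpa only [Function.Involutive.coe_toPerm, hinv u, hinv w] using swapOn_adj hclosed h

@[simp]
lemma coe_swapOnIso (hdisj : ∀ u ∈ S, φ u ∉ S)
    (hclosed : ∀ u ∈ S, ∀ w, G.Adj u w → w ∈ S ∨ φ w = w) :
    ⇑(swapOnIso φ S hdisj hclosed) = swapOn φ S :=
  rfl

end Iso

lemma IsCactus.exists_involution_of_odd_orderOf (hG : IsCactus G) {x : V} {φ : G ≃g G}
    (hx : φ x = x) (hφ : φ ≠ 1) (hodd : Odd (orderOf φ)) :
    ∃ σ : G ≃g G, IsInvolution G σ ∧ σ x = x := by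
  obtain ⟨z, y, hzy, hz, hy⟩ := Iso.exists_adj_apply_eq_of_ne_one hG.1 hx hφ
  have hdisj : ∀ u ∈ G.branch z y, φ u ∉ G.branch z y := by
    intro u hu hφu
    have hφy : φ y ∈ G.branch z y := mem_branch_of_mem_branch hφu (hz ▸ φ.apply_mem_branch hu)
    have hφφy : (φ ^ 2) • y = y := by
      rw [pow_two, RelIso.smul_def, RelIso.mul_apply, hG.2.apply_apply_eq φ hz hzy hy hφy]
    exact hy (smul_eq_of_pow_two_smul_eq hodd hφφy)
  have hclosed : ∀ u ∈ G.branch z y, ∀ w, G.Adj u w → w ∈ G.branch z y ∨ φ w = w := by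
    intro u hu w huw
    by_cases hw : w = z
    · exact .inr (hw ▸ hz)
    · exact .inl (mem_branch_of_adj hu huw hw)
  refine ⟨Iso.swapOnIso φ _ hdisj hclosed, ⟨fun h => hy ?_, ?_⟩, ?_⟩
  · have hσy := congrArg (· y) h
    simpa [Iso.swapOn_of_mem (mem_branch_self hzy.ne.symm)] using hσy
  · exact Iso.swapOn_involutive hdisj
  · simpa using Iso.swapOn_of_apply_eq hdisj hx

end SimpleGraph

/-- If a rooted cactus graph `(H, x)` has a non-trivial automorphism (fixing
the root `x`), then it has an involution (fixing `x`). -/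
theorem rooted_cactus_nontrivialAut_involution {V : Type*} [Fintype V]
    (G : SimpleGraph V) (x : V) (hcactus : IsCactus G)
    (hnt : ∃ π : G ≃g G, π x = x ∧ π.toEquiv ≠ Equiv.refl V) :
    ∃ σ : G ≃g G, IsInvolution G σ ∧ σ x = x := by
  obtain ⟨π, hπx, hπ⟩ := hnt
  have : Finite (G ≃g G) := Finite.of_injective _ RelIso.toEquiv_injective
  rcases Nat.even_or_odd (orderOf π) with heven | hodd
  · exact exists_involution_of_even_orderOf hπx (orderOf_pos π) heven
  · exact hcactus.exists_involution_of_odd_orderOf hπx (fun h => hπ (h ▸ rfl)) hodd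
end

section
/- If {H_1,…,H_κ} is the split of an involution-free graph H at a cut vertex v, then for each j∈[κ] the rooted graph (H_j,v) is involution-free. -/
open SimpleGraph

/-- Each member of the split of an involution-free graph at a cut vertex `x`,
rooted at `x`, is involution-free. -/
theorem splitComponent_rootedInvolutionFree {V : Type*} [Fintype V]
    (G : SimpleGraph V) (hif : InvolutionFree G)
    (x : V) (hcut : IsCutVertex G x)
    (C : Set V) (hC : IsSplitComponent G x C) :
    RootedInvolutionFree (G.induce (C ∪ {x}))
      ⟨x, Set.mem_union_right _ (Set.mem_singleton x)⟩ := by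
  classical
  rintro ⟨σ, ⟨hne, hinv⟩, hfix⟩
  apply hif
  have hxS : x ∈ C ∪ {x} := Set.mem_union_right _ rfl
  have hxC : x ∉ C := hC.1
  have hclosed : ∀ u ∈ C, ∀ v, G.Adj u v → v ∈ C ∪ {x} := by
    intro u hu v hadj
    by_cases hvx : v = x
    · exact Or.inr hvx
    · exact Or.inl (hC.2.2.2 u hu v hadj hvx)
  have hσC : ∀ (a : ↥(C ∪ {x})), a.val ∈ C → (σ a).val ∈ C := by
    intro a ha
    rcases (σ a).prop with h | h
    · exact h
    · exfalso
      have h1 : σ a = ⟨x, hxS⟩ := Subtype.ext h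
      have h2 : a = ⟨x, hxS⟩ := σ.injective (h1.trans hfix.symm)
      exact hxC (by rw [h2] at ha; exact ha)
  let f : V → V := fun v => if h : v ∈ C ∪ {x} then (σ ⟨v, h⟩ : V) else v
  have hfS : ∀ v (h : v ∈ C ∪ {x}), f v = (σ ⟨v, h⟩ : V) := fun v h => dif_pos h
  have hfN : ∀ v, v ∉ C ∪ {x} → f v = v := fun v h => dif_neg h
  have hff : ∀ v, f (f v) = v := by
    intro v
    by_cases h : v ∈ C ∪ {x}
    · rw [hfS v h, hfS _ (σ ⟨v, h⟩).prop]
      exact congrArg Subtype.val (hinv ⟨v, h⟩)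
    · rw [hfN v h, hfN v h]
  have hfx : f x = x := by
    rw [hfS x hxS]
    exact congrArg Subtype.val hfix
  have hfC : ∀ v, v ∈ C → f v ∈ C := by
    intro v h
    rw [hfS v (Or.inl h)]
    exact hσC ⟨v, Or.inl h⟩ h
  have hadj1 : ∀ u v, G.Adj u v → G.Adj (f u) (f v) := by
    intro u v huv
    by_cases hu : u ∈ C ∪ {x}
    · by_cases hv : v ∈ C ∪ {x}
      · rw [hfS u hu, hfS v hv]
        exact σ.map_adj_iff.mpr huv
      · have hux : u = x := by
          rcases hu with h | h
          · exact absurd (hclosed u h v huv) hv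
          · exact h
        rw [hux, hfx, hfN v hv, ← hux]
        exact huv
    · by_cases hv : v ∈ C ∪ {x}
      · have hvx : v = x := by
          rcases hv with h | h
          · exact absurd (hclosed v h u huv.symm) hu
          · exact h
        rw [hvx, hfx, hfN u hu, ← hvx]
        exact huv
      · rw [hfN u hu, hfN v hv]
        exact huv
  have hadj : ∀ u v, G.Adj (f u) (f v) ↔ G.Adj u v := by
    intro u v
    constructor
    · intro h
      have h2 := hadj1 _ _ h
      rwa [hff, hff] at h2
    · exact hadj1 u v
  refine ⟨⟨⟨f, f, hff, hff⟩, hadj _ _⟩, ?_, fun v => hff v⟩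
  have hw : ∃ w : ↥(C ∪ {x}), σ w ≠ w := by
    by_contra h
    push_neg at h
    exact hne (Equiv.ext fun w => h w)
  obtain ⟨w, hw⟩ := hw
  intro heq
  apply hw
  have h1 : f w.val = w.val := congrArg (fun e : V ≃ V => e w.val) heq
  exact Subtype.ext ((hfS w.val w.prop).symm.trans h1)
end

section
/- Let H be a cactus graph and let P = x_1 x_2 … x_{ℓ+1} be a path of length ℓ in H that is the unique shortest path from x_1 to x_{ℓ+1} in H. Then the three sets T_1(P), T_2(P) and T_3(P) are pairwise disjoint and their union is the set of all walks of length ℓ+2 from x_1 to x_{ℓ+1} in H. -/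
open SimpleGraph

open SimpleGraph.Walk in
/-- `W` is in `T₁(P)`: `W` differs from `P` by going the long way around one
detour cycle, replacing a segment `P₂` of `P` (of length `b - a ≥ 1`) by a path
`Q` of length two more, internally avoiding the replaced interior vertices. -/
def InT1 {V : Type*} {G : SimpleGraph V} {u v : V} (P W : G.Walk u v) : Prop :=
  ∃ (y z : V) (P₁ : G.Walk u y) (P₂ : G.Walk y z) (P₃ : G.Walk z v)
    (Q : G.Walk y z),
    P = P₁.append (P₂.append P₃) ∧ 1 ≤ P₂.length ∧
    Q.IsPath ∧ Q.length = P₂.length + 2 ∧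
    (∀ w ∈ Q.support, w ∈ P₂.support → w = y ∨ w = z) ∧
    W = P₁.append (Q.append P₃)

open SimpleGraph.Walk in
/-- `W` is in `T₂(P)`: `W` differs from `P` by going the long way around two
detour cycles, replacing two disjoint segments `P₂` and `P₄` of `P` (each of
length at least 1) by paths one edge longer, internally avoiding the replaced
interior vertices. -/
def InT2 {V : Type*} {G : SimpleGraph V} {u v : V} (P W : G.Walk u v) : Prop :=
  ∃ (y z y' z' : V) (P₁ : G.Walk u y) (P₂ : G.Walk y z) (P₃ : G.Walk z y')
    (P₄ : G.Walk y' z') (P₅ : G.Walk z' v) (Q : G.Walk y z) (Q' : G.Walk y' z'),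
    P = P₁.append (P₂.append (P₃.append (P₄.append P₅))) ∧
    1 ≤ P₂.length ∧ 1 ≤ P₄.length ∧
    Q.IsPath ∧ Q.length = P₂.length + 1 ∧
    (∀ w ∈ Q.support, w ∈ P₂.support → w = y ∨ w = z) ∧
    Q'.IsPath ∧ Q'.length = P₄.length + 1 ∧
    (∀ w ∈ Q'.support, w ∈ P₄.support → w = y' ∨ w = z') ∧
    W = P₁.append (Q.append (P₃.append (Q'.append P₅)))

open SimpleGraph.Walk in
/-- `W` is in `T₃(P)`: `W` follows `P` but repeats one incident edge, stepping
from some vertex of `P` to a neighbour `z` and immediately back. -/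
def InT3 {V : Type*} {G : SimpleGraph V} {u v : V} (P W : G.Walk u v) : Prop :=
  ∃ (y : V) (P₁ : G.Walk u y) (P₂ : G.Walk y v) (z : V) (h : G.Adj y z),
    P = P₁.append P₂ ∧
    W = P₁.append (SimpleGraph.Walk.cons h (SimpleGraph.Walk.cons h.symm P₂))

/-!
A `u`–`v` walk of length `ℓ(P) + 2` that is not a path contains a closed subwalk; cutting it out
leaves a walk of length at most `ℓ(P)`, which must be `P`, so the closed subwalk is a single edge
traversed back and forth: the walk is in `T₃(P)`. A path `W` of that length follows `P`, leaves it
and returns at the first vertex of `P` it meets again. As `P` is the unique shortest path, this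
detour is one or two edges longer than the segment of `P` it replaces, and the rest of `W` is a
walk of excess one or zero over the rest of `P`: this gives `T₂(P)` or `T₁(P)`.

Conversely, walks in `T₁(P)` and `T₂(P)` are paths, since a back-and-forth step placed anywhere in
them would make `P` or a detour revisit a vertex. They are told apart by positions: a walk in
`T₁(P)` meets each vertex of `P` at the same position as `P` or two steps later, whereas a walk in
`T₂(P)` reaches the end of its first detour one step later than `P` does.
-/

namespace SimpleGraph.Walk

variable {V : Type*} {G : SimpleGraph V}

theorem append_right_cancel {u w v : V} {A B : G.Walk u w} {C : G.Walk w v}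
    (h : A.append C = B.append C) : A = B := by
  have hs := congrArg support h
  rw [support_append, support_append] at hs
  exact ext_support (List.append_cancel_right hs)

theorem append_left_cancel {u w v : V} {A : G.Walk u w} {C D : G.Walk w v}
    (h : A.append C = A.append D) : C = D := by
  have hs := congrArg support h
  rw [support_append, support_append] at hs
  exact ext_support <| by
    rw [← cons_tail_support C, ← cons_tail_support D, List.append_cancel_left hs]

theorem getVert_append_of_le {u w v : V} (A : G.Walk u w) (B : G.Walk w v) {k : ℕ}
    (hk : k ≤ A.length) : (A.append B).getVert k = A.getVert k := by
  rw [getVert_append', if_pos hk]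

theorem getVert_append_length_add {u w v : V} (A : G.Walk u w) (B : G.Walk w v) (j : ℕ) :
    (A.append B).getVert (A.length + j) = B.getVert j := by
  simp [getVert_append]

theorem IsPath.getVert_inj {u v : V} {p : G.Walk u v} (hp : p.IsPath) {i j : ℕ}
    (hi : i ≤ p.length) (hj : j ≤ p.length) (h : p.getVert i = p.getVert j) : i = j :=
  hp.getVert_injOn hi hj h

theorem exists_eq_append_append_of_not_isPath {u v : V} (W : G.Walk u v) (hW : ¬W.IsPath) :
    ∃ (x : V) (A : G.Walk u x) (M : G.Walk x x) (B : G.Walk x v),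
      W = A.append (M.append B) ∧ 2 ≤ M.length := by
  classical
  induction W with
  | nil => exact absurd IsPath.nil hW
  | @cons u w v h W ih =>
    by_cases hu : u ∈ W.support
    · refine ⟨u, nil, cons h (W.takeUntil u hu), W.dropUntil u hu, by simp [take_spec], ?_⟩
      have : (W.takeUntil u hu).length ≠ 0 := fun h0 =>
        h.ne (eq_of_length_eq_zero h0).symm
      simp only [length_cons]
      omega
    · obtain ⟨x, A, M, B, rfl, hM⟩ := ih fun hp => hW (hp.cons hu)
      exact ⟨x, cons h A, M, B, rfl, hM⟩

theorem exists_eq_append_first_mem {S : Set V} {w v : V} (W : G.Walk w v) (hv : v ∈ S) :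
    ∃ z ∈ S, ∃ (Q : G.Walk w z) (R : G.Walk z v),
      W = Q.append R ∧ ∀ c ∈ Q.support, c ∈ S → c = z := by
  induction W with
  | nil => exact ⟨_, hv, nil, nil, rfl, by simp⟩
  | @cons a b c h W ih =>
    by_cases ha : a ∈ S
    · exact ⟨a, ha, nil, cons h W, rfl, by simp⟩
    · obtain ⟨z, hz, Q, R, rfl, hQ⟩ := ih hv
      refine ⟨z, hz, cons h Q, R, rfl, ?_⟩
      simp only [support_cons, List.mem_cons, forall_eq_or_imp]
      exact ⟨fun h => absurd h ha, hQ⟩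

/-- `Q` is a path replacing the nontrivial segment `P₂` of a path and meeting it only at the
ends: the paths `x_a P′ x_b` in the definitions of `T₁(P)` and `T₂(P)`. -/
def IsDetour {y z : V} (P₂ Q : G.Walk y z) : Prop :=
  1 ≤ P₂.length ∧ Q.IsPath ∧ ∀ w ∈ Q.support, w ∈ P₂.support → w = y ∨ w = z

end SimpleGraph.Walk

namespace IsUniqueShortestPath

open SimpleGraph Walk

variable {V : Type*} {G : SimpleGraph V} {u v : V} {P : G.Walk u v}

theorem length_le (hP : IsUniqueShortestPath G P) (R : G.Walk u v) : P.length ≤ R.length := by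
  classical
  by_contra! h
  have hb := hP.2 R.bypass R.bypass_isPath (R.length_bypass_le_length.trans h.le)
  have := R.length_bypass_le_length
  rw [hb] at this
  omega

theorem eq_of_length_le (hP : IsUniqueShortestPath G P) {R : G.Walk u v}
    (hR : R.length ≤ P.length) : R = P := by
  classical
  have hb := R.bypass_eq_self_of_length_le_length_bypass (hR.trans (hP.length_le _))
  exact hP.2 R (hb ▸ R.bypass_isPath) hR

theorem of_append_left {w : V} {A : G.Walk u w} {B : G.Walk w v}
    (hP : IsUniqueShortestPath G (A.append B)) : IsUniqueShortestPath G A :=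
  ⟨hP.1.of_append_left, fun R _ hR =>
    append_right_cancel (hP.eq_of_length_le (R := R.append B) (by simp [hR]))⟩

theorem of_append_right {w : V} {A : G.Walk u w} {B : G.Walk w v}
    (hP : IsUniqueShortestPath G (A.append B)) : IsUniqueShortestPath G B :=
  ⟨hP.1.of_append_right, fun R _ hR =>
    append_left_cancel (hP.eq_of_length_le (R := A.append R) (by simp [hR]))⟩

theorem of_cons {x : V} {h : G.Adj u x} {P : G.Walk x v}
    (hP : IsUniqueShortestPath G (cons h P)) : IsUniqueShortestPath G P :=
  of_append_right (A := cons h nil) hP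

theorem isPath_of_length_lt (hP : IsUniqueShortestPath G P) {R : G.Walk u v}
    (hR : R.length < P.length + 2) : R.IsPath := by
  by_contra hnp
  obtain ⟨x, A, M, B, rfl, hM⟩ := R.exists_eq_append_append_of_not_isPath hnp
  have := hP.length_le (A.append B)
  simp only [length_append] at this hR
  omega

theorem exists_detour_of_snd_ne (hP : IsUniqueShortestPath G P) {W : G.Walk u v}
    (hW : W.IsPath) (hsnd : W.snd ≠ P.snd) :
    ∃ (z : V) (P₂ Q : G.Walk u z) (P₃ R : G.Walk z v),
      P = P₂.append P₃ ∧ W = Q.append R ∧ P₂.IsDetour Q ∧ P₂.length < Q.length := by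
  classical
  cases W with
  | nil => exact (hsnd (by rw [eq_nil_iff_nil.2 (isPath_iff_nil.1 hP.1)])).elim
  | @cons _ w _ h W =>
    obtain ⟨z, hzP, Q, R, rfl, hfirst⟩ :=
      W.exists_eq_append_first_mem (S := {x | x ∈ P.support}) P.end_mem_support
    rw [← cons_append] at hW
    have hQ : (cons h Q).IsPath := hW.of_append_left
    have hzu : z ≠ u := fun hzu => ((cons_isPath_iff h Q).1 hQ).2 (hzu ▸ Q.end_mem_support)
    have hP₂ : IsUniqueShortestPath G (P.takeUntil z hzP) :=
      of_append_left (B := P.dropUntil z hzP) ((P.take_spec hzP).symm ▸ hP)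
    have hm : 1 ≤ (P.takeUntil z hzP).length :=
      Nat.one_le_iff_ne_zero.2 fun h0 => hzu (eq_of_length_eq_zero h0).symm
    refine ⟨z, P.takeUntil z hzP, cons h Q, P.dropUntil z hzP, R, (P.take_spec hzP).symm, rfl,
      ⟨hm, hQ, fun c hc hcP => ?_⟩, ?_⟩
    · rcases List.mem_cons.1 (support_cons h Q ▸ hc) with rfl | hc
      · exact Or.inl rfl
      · exact Or.inr (hfirst c hc (P.support_takeUntil_subset_support hzP hcP))
    · by_contra! hle
      have hQP₂ := hP₂.eq_of_length_le hle
      apply hsnd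
      rw [← P.snd_takeUntil hzu hzP, ← hQP₂]
      simp

theorem exists_detour (hP : IsUniqueShortestPath G P) {W : G.Walk u v} (hW : W.IsPath)
    (hne : W ≠ P) :
    ∃ (y z : V) (P₁ : G.Walk u y) (P₂ Q : G.Walk y z) (P₃ R : G.Walk z v),
      P = P₁.append (P₂.append P₃) ∧ W = P₁.append (Q.append R) ∧ P₂.IsDetour Q ∧
        P₂.length < Q.length := by
  induction P with
  | nil => exact (hne (eq_nil_iff_nil.2 (isPath_iff_nil.1 hW))).elim
  | @cons u x v h' P ih =>
    by_cases hsnd : W.snd = x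
    · cases W with
      | nil => exact absurd (isPath_iff_nil.1 hP.1) not_nil_cons
      | cons h W =>
        simp only [snd_cons] at hsnd
        subst hsnd
        obtain ⟨y, z, P₁, P₂, Q, P₃, R, rfl, rfl, hd, hlt⟩ :=
          ih hP.of_cons hW.of_cons fun h => hne (h ▸ rfl)
        exact ⟨y, z, cons h' P₁, P₂, Q, P₃, R, rfl, rfl, hd, hlt⟩
    · obtain ⟨z, P₂, Q, P₃, R, hP₂, hQ, hd, hlt⟩ :=
        hP.exists_detour_of_snd_ne hW (by simpa using hsnd)
      exact ⟨u, z, nil, P₂, Q, P₃, R, hP₂, hQ, hd, hlt⟩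

theorem exists_detour_of_length_eq_succ (hP : IsUniqueShortestPath G P) {W : G.Walk u v}
    (hW : W.length = P.length + 1) :
    ∃ (y z : V) (P₁ : G.Walk u y) (P₂ Q : G.Walk y z) (P₃ : G.Walk z v),
      P = P₁.append (P₂.append P₃) ∧ W = P₁.append (Q.append P₃) ∧ P₂.IsDetour Q ∧
        Q.length = P₂.length + 1 := by
  obtain ⟨y, z, P₁, P₂, Q, P₃, R, rfl, rfl, hd, hlt⟩ :=
    hP.exists_detour (W := W) (hP.isPath_of_length_lt (by omega)) fun h => by subst h; omega
  have hP₃ := hP.of_append_right.of_append_right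
  have := hP₃.length_le R
  simp only [length_append] at hW
  obtain rfl := hP₃.eq_of_length_le (R := R) (by omega)
  exact ⟨y, z, P₁, P₂, Q, _, rfl, rfl, hd, by omega⟩

theorem inT1_or_inT2_of_isPath (hP : IsUniqueShortestPath G P) {W : G.Walk u v}
    (hW : W.length = P.length + 2) (hWp : W.IsPath) : InT1 P W ∨ InT2 P W := by
  obtain ⟨y, z, P₁, P₂, Q, P₃, R, rfl, rfl, ⟨hm, hQ, havoid⟩, hlt⟩ :=
    hP.exists_detour hWp fun h => by subst h; omega
  have hP₃ := hP.of_append_right.of_append_right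
  have := hP₃.length_le R
  simp only [length_append] at hW
  rcases (by omega : Q.length = P₂.length + 2 ∨ R.length = P₃.length + 1) with hQl | hRl
  · obtain rfl := hP₃.eq_of_length_le (R := R) (by omega)
    exact Or.inl ⟨y, z, P₁, P₂, _, Q, rfl, hm, hQ, hQl, havoid, rfl⟩
  · obtain ⟨y', z', P₃, P₄, Q', P₅, rfl, rfl, ⟨hm', hQ', havoid'⟩, hQl'⟩ :=
      hP₃.exists_detour_of_length_eq_succ hRl
    exact Or.inr ⟨y, z, y', z', P₁, P₂, P₃, P₄, P₅, Q, Q', rfl, hm, hm', hQ, by omega, havoid,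
      hQ', hQl', havoid', rfl⟩

theorem isPath_or_inT3 (hP : IsUniqueShortestPath G P) {W : G.Walk u v}
    (hW : W.length = P.length + 2) : W.IsPath ∨ InT3 P W := by
  refine or_iff_not_imp_left.2 fun hnp => ?_
  obtain ⟨x, A, M, B, rfl, hM⟩ := W.exists_eq_append_append_of_not_isPath hnp
  have := hP.length_le (A.append B)
  simp only [length_append] at this hW
  have hAB : A.append B = P := hP.eq_of_length_le (by simp only [length_append]; omega)
  match M, hM with
  | cons h (cons _ nil), _ => exact ⟨x, A, B, _, h, hAB.symm, rfl⟩
  | cons _ (cons _ (cons _ _)), _ => simp only [length_cons] at hW; omega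

end IsUniqueShortestPath

section WalkClasses

open SimpleGraph Walk

variable {V : Type*} {G : SimpleGraph V} {u v : V} {P W : G.Walk u v}

theorem InT1.length_eq (h : InT1 P W) : W.length = P.length + 2 := by
  obtain ⟨_, _, _, _, _, _, rfl, -, -, hQl, -, rfl⟩ := h
  simp only [length_append]
  omega

theorem InT2.length_eq (h : InT2 P W) : W.length = P.length + 2 := by
  obtain ⟨_, _, _, _, _, _, _, _, _, _, _, rfl, -, -, -, hQl, -, -, hQl', -, rfl⟩ := h
  simp only [length_append]
  omega

theorem InT3.length_eq (h : InT3 P W) : W.length = P.length + 2 := by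
  obtain ⟨_, _, _, _, _, rfl, rfl⟩ := h
  simp only [length_append, length_cons]
  omega

theorem InT3.exists_getVert_shift (h : InT3 P W) :
    ∃ a, (∀ k ≤ a, W.getVert k = P.getVert k) ∧
      ∀ k, a + 2 ≤ k → W.getVert k = P.getVert (k - 2) := by
  obtain ⟨y, P₁, P₂, z, h, rfl, rfl⟩ := h
  refine ⟨P₁.length, fun k hk => ?_, fun k hk => ?_⟩
  · rw [getVert_append_of_le _ _ hk, getVert_append_of_le _ _ hk]
  · obtain ⟨j, rfl⟩ := Nat.exists_eq_add_of_le hk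
    rw [show P₁.length + 2 + j = P₁.length + (j + 2) by omega,
      show P₁.length + (j + 2) - 2 = P₁.length + j by omega,
      getVert_append_length_add, getVert_append_length_add]
    simp

theorem not_inT3_of_detour {y z : V} {P₁ : G.Walk u y} {P₂ Q : G.Walk y z} {P₃ R : G.Walk z v}
    (hP : P.IsPath) (hPeq : P = P₁.append (P₂.append P₃)) (hWeq : W = P₁.append (Q.append R))
    (hQ : Q.IsPath) (hlt : P₂.length < Q.length) (hQ2 : 2 ≤ Q.length) : ¬InT3 P W := by
  intro hT3
  obtain ⟨a, hpre, hpost⟩ := hT3.exists_getVert_shift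
  have hPlen : P.length = P₁.length + P₂.length + P₃.length := by
    simp only [hPeq, length_append]; omega
  have hWQ : ∀ j ≤ Q.length, W.getVert (P₁.length + j) = Q.getVert j := fun j hj => by
    rw [hWeq, getVert_append_length_add, getVert_append_of_le _ _ hj]
  have hy : P.getVert P₁.length = Q.getVert 0 := by
    simpa [hPeq] using getVert_append_length_add P₁ (P₂.append P₃) 0
  have hz : P.getVert (P₁.length + P₂.length) = Q.getVert Q.length := by
    rw [hPeq, getVert_append_length_add, getVert_append_of_le _ _ le_rfl]
    simp
  rcases (by omega : a + 2 ≤ P₁.length ∨ a + 1 = P₁.length ∨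
      (P₁.length ≤ a ∧ a + 2 ≤ P₁.length + Q.length) ∨ P₁.length + P₂.length ≤ a)
    with h | h | h | h
  · have := hP.getVert_inj (by omega) (by omega)
      ((hy.trans (hWQ 0 (by omega)).symm).trans (hpost _ h))
    omega
  · have := hQ.getVert_inj (i := 2) (j := 0) (by omega) (by omega) <| by
      rw [← hWQ 2 hQ2, hpost _ (by omega), show P₁.length + 2 - 2 = P₁.length by omega, hy]
    omega
  · have e : Q.getVert (a - P₁.length) = Q.getVert (a - P₁.length + 2) := by
      rw [← hWQ _ (by omega), ← hWQ _ (by omega), show P₁.length + (a - P₁.length) = a by omega,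
        show P₁.length + (a - P₁.length + 2) = a + 2 by omega, hpre a le_rfl,
        hpost _ le_rfl, Nat.add_sub_cancel]
    have := hQ.getVert_inj (by omega) (by omega) e
    omega
  · have := hQ.getVert_inj hlt.le le_rfl <| by
      rw [← hWQ _ hlt.le, hpre _ h, hz]
    omega

theorem InT1.not_inT3 (hP : P.IsPath) (h : InT1 P W) : ¬InT3 P W := by
  obtain ⟨_, _, _, _, _, _, hPeq, hm, hQ, hQl, -, hWeq⟩ := h
  exact not_inT3_of_detour hP hPeq hWeq hQ (by omega) (by omega)

theorem InT2.not_inT3 (hP : P.IsPath) (h : InT2 P W) : ¬InT3 P W := by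
  obtain ⟨_, _, _, _, _, _, _, _, _, _, _, hPeq, hm, -, hQ, hQl, -, -, -, -, hWeq⟩ := h
  exact not_inT3_of_detour hP hPeq hWeq hQ (by omega) (by omega)

theorem InT1.isPath (hP : IsUniqueShortestPath G P) (h : InT1 P W) : W.IsPath :=
  (hP.isPath_or_inT3 h.length_eq).resolve_right (h.not_inT3 hP.1)

theorem InT1.exists_getVert_shift (hP : P.IsPath) (h : InT1 P W) :
    ∃ a b, (∀ k ≤ a, W.getVert k = P.getVert k) ∧
      (∀ i, b ≤ i → W.getVert (i + 2) = P.getVert i) ∧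
      ∀ i k, a < i → i < b → a < k → k < b + 2 → W.getVert k ≠ P.getVert i := by
  obtain ⟨y, z, P₁, P₂, P₃, Q, hPeq, -, -, hQl, havoid, hWeq⟩ := h
  have hPlen : P.length = P₁.length + P₂.length + P₃.length := by
    simp only [hPeq, length_append]; omega
  have hy : P.getVert P₁.length = y := by
    simpa [hPeq] using getVert_append_length_add P₁ (P₂.append P₃) 0
  have hz : P.getVert (P₁.length + P₂.length) = z := by
    rw [hPeq, getVert_append_length_add, getVert_append_of_le _ _ le_rfl, getVert_length]
  refine ⟨P₁.length, P₁.length + P₂.length, fun k hk => ?_, fun i hi => ?_,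
    fun i k hi₁ hi₂ hk₁ hk₂ heq => ?_⟩
  · rw [hWeq, hPeq, getVert_append_of_le _ _ hk, getVert_append_of_le _ _ hk]
  · obtain ⟨j, rfl⟩ := Nat.exists_eq_add_of_le hi
    rw [hWeq, hPeq, show P₁.length + P₂.length + j + 2 = P₁.length + (Q.length + j) by omega,
      add_assoc, getVert_append_length_add, getVert_append_length_add,
      getVert_append_length_add, getVert_append_length_add]
  · have hkQ : W.getVert k ∈ Q.support := by
      obtain ⟨j, rfl⟩ := Nat.exists_eq_add_of_le hk₁.le
      rw [hWeq, getVert_append_length_add, getVert_append_of_le _ _ (by omega)]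
      exact Q.getVert_mem_support j
    have hiP₂ : P.getVert i ∈ P₂.support := by
      obtain ⟨j, rfl⟩ := Nat.exists_eq_add_of_le hi₁.le
      rw [hPeq, getVert_append_length_add, getVert_append_of_le _ _ (by omega)]
      exact P₂.getVert_mem_support j
    rcases havoid _ hkQ (heq ▸ hiP₂) with hc | hc
    · have := hP.getVert_inj (i := i) (j := P₁.length) (by omega) (by omega)
        (by rw [← heq, hc, hy])
      omega
    · have := hP.getVert_inj (i := i) (j := P₁.length + P₂.length) (by omega) (by omega)
        (by rw [← heq, hc, hz])
      omega

theorem InT1.getVert_eq_getVert (hP : P.IsPath) (hW : W.IsPath) (h : InT1 P W) {i k : ℕ}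
    (hi : i ≤ P.length) (hk : k ≤ W.length) (heq : W.getVert k = P.getVert i) :
    k = i ∨ k = i + 2 := by
  have hWlen := h.length_eq
  obtain ⟨a, b, hpre, hpost, hmid⟩ := h.exists_getVert_shift hP
  rcases (by omega : i ≤ a ∨ b ≤ i ∨ (a < i ∧ i < b)) with hi' | hi' | ⟨hi₁, hi₂⟩
  · exact Or.inl (hW.getVert_inj hk (by omega) (heq.trans (hpre i hi').symm))
  · exact Or.inr (hW.getVert_inj hk (by omega) (heq.trans (hpost i hi').symm))
  exfalso
  rcases (by omega : k ≤ a ∨ b + 2 ≤ k ∨ (a < k ∧ k < b + 2)) with hk' | hk' | ⟨hk₁, hk₂⟩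
  · have := hP.getVert_inj (by omega) hi ((hpre k hk').symm.trans heq)
    omega
  · have := hP.getVert_inj (i := k - 2) (by omega) hi <| by
      rw [← hpost _ (by omega), Nat.sub_add_cancel (by omega), heq]
    omega
  · exact hmid i k hi₁ hi₂ hk₁ hk₂ heq

theorem InT1.not_inT2 (hP : IsUniqueShortestPath G P) (h₁ : InT1 P W) : ¬InT2 P W := by
  intro h₂
  have hW := h₁.isPath hP
  have hWlen := h₁.length_eq
  obtain ⟨_, _, _, _, P₁, P₂, P₃, P₄, P₅, Q, _, hPeq, _, _, _, hQl, -, -, -, -, hWeq⟩ := h₂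
  have hPlen : P.length = P₁.length + P₂.length + (P₃.append (P₄.append P₅)).length := by
    simp only [hPeq, length_append]; omega
  have hrejoin : W.getVert (P₁.length + Q.length) = P.getVert (P₁.length + P₂.length) := by
    rw [hWeq, hPeq, getVert_append_length_add, getVert_append_length_add,
      getVert_append_of_le _ _ le_rfl, getVert_append_of_le _ _ le_rfl]
    simp
  have := h₁.getVert_eq_getVert hP.1 hW (by omega) (by omega) hrejoin
  omega

end WalkClasses

theorem cactus_walk_partition_general {V : Type*}
    (G : SimpleGraph V)
    {u v : V} (P : G.Walk u v) (hP : IsUniqueShortestPath G P) :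
    (∀ W : G.Walk u v, W.length = P.length + 2 ↔ (InT1 P W ∨ InT2 P W ∨ InT3 P W)) ∧
    (∀ W : G.Walk u v, ¬(InT1 P W ∧ InT2 P W)) ∧
    (∀ W : G.Walk u v, ¬(InT1 P W ∧ InT3 P W)) ∧
    (∀ W : G.Walk u v, ¬(InT2 P W ∧ InT3 P W)) := by
  refine ⟨fun W => ⟨fun hW => ?_, ?_⟩, fun W h => h.1.not_inT2 hP h.2,
    fun W h => h.1.not_inT3 hP.1 h.2, fun W h => h.1.not_inT3 hP.1 h.2⟩
  · rcases hP.isPath_or_inT3 hW with hWp | hT3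
    · exact (hP.inT1_or_inT2_of_isPath hW hWp).imp_right Or.inl
    · exact Or.inr (Or.inr hT3)
  · rintro (h | h | h)
    exacts [h.length_eq, h.length_eq, h.length_eq]

/-- If `P` is the unique shortest path between its endpoints in a cactus graph,
then `T₁(P)`, `T₂(P)`, `T₃(P)` are pairwise disjoint and their union is the set
of all walks of length `ℓ(P) + 2` between the endpoints of `P`. -/
theorem cactus_walk_partition {V : Type*} [Fintype V]
    (G : SimpleGraph V) (hcactus : IsCactus G)
    {u v : V} (P : G.Walk u v) (hP : IsUniqueShortestPath G P) :
    (∀ W : G.Walk u v, W.length = P.length + 2 ↔ (InT1 P W ∨ InT2 P W ∨ InT3 P W)) ∧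
    (∀ W : G.Walk u v, ¬(InT1 P W ∧ InT2 P W)) ∧
    (∀ W : G.Walk u v, ¬(InT1 P W ∧ InT3 P W)) ∧
    (∀ W : G.Walk u v, ¬(InT2 P W ∧ InT3 P W)) :=
  cactus_walk_partition_general G P hP
end
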